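/- Closed-form representation of the numerical scheme Ξ^{[3]} (Remark 3.4 of the paper). Let ψ₀, ψ'₀, ψ''₀ ∈ E be given and define recursively: ψ₁ := cos(hG) ψ₀ + G⁻¹ sin(hG) ψ'₀ + ∫₀ʰ G⁻¹ sin((h−τ)G) (m(t₀+τ)(ψ₀ + τ ψ'₀ + (τ²/2) ψ''₀)) dτ, ψ'₁ := −G sin(hG) ψ₀ + cos(hG) ψ'₀ + ∫₀ʰ cos((h−τ)G) (m(t₀+τ)(ψ₀ + τ ψ'₀ + (τ²/2) ψ''₀)) dτ, and for 1 ≤ k ≤ K−1: ψ_{k+1} := cos(hG) ψ_k + G⁻¹ sin(hG) ψ'_k + ∫₀ʰ G⁻¹ sin((h−τ)G) (m(t_k+τ)(ψ_k + τ ψ'_k + (τ²/(2h))(ψ'_k − ψ'_{k−1}))) dτ, ψ'_{k+1} := −G sin(hG) ψ_k + cos(hG) ψ'_k + ∫₀ʰ cos((h−τ)G) (m(t_k+τ)(ψ_k + τ ψ'_k + (τ²/(2h))(ψ'_k − ψ'_{k−1}))) dτ. Then for every 2 ≤ k ≤ K: ψ_k = cos(khG) ψ₀ + G⁻¹ sin(khG)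 ψ'₀ + ∫₀ʰ G⁻¹ sin((kh−τ)G)(m(t₀+τ)(ψ₀ + τψ'₀ + (τ²/2)ψ''₀)) dτ + Σ_{l=1}^{k−1} ∫₀ʰ G⁻¹ sin(((k−l)h−τ)G)(m(t_l+τ)(ψ_l + τψ'_l + (τ²/(2h))(ψ'_l − ψ'_{l−1}))) dτ, and ψ'_k = −G sin(khG) ψ₀ + cos(khG) ψ'₀ + ∫₀ʰ cos((kh−τ)G)(m(t₀+τ)(ψ₀ + τψ'₀ + (τ²/2)ψ''₀)) dτ + Σ_{l=1}^{k−1} ∫₀ʰ cos(((k−l)h−τ)G)(m(t_l+τ)(ψ_l + τψ'_l + (τ²/(2h))(ψ'_l − ψ'_{l−1}))) dτ. -/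

import Mathlib

/-!
The pair `X_k = (ψ_k, ψ'_k)` is propagated by the block operator
`U t = [[cos tG, G⁻¹ sin tG], [-G sin tG, cos tG]]` on `E × E`: each step of the scheme reads
`X_{k+1} = U h X_k + ∫₀ʰ U (h - τ) (0, w_k τ) dτ`, with `w_k` the forcing term of step `k`. The addition formulas for `cos` and `sin`
make `U` a one-parameter group, so unrolling the recursion gives a discrete Duhamel formula:
`U h` moves inside each integral and shifts its time argument by `h`.
-/

/-- `cos(tG) := (exp(itG) + exp(−itG))/2` in a complex unital Banach algebra. -/
noncomputable def opCos {A : Type*} [NormedRing A] [NormedAlgebra ℂ A] (t : ℝ) (G : A) : A :=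
  (2 : ℂ)⁻¹ • (NormedSpace.exp (((t : ℂ) * Complex.I) • G) +
    NormedSpace.exp ((-(t : ℂ) * Complex.I) • G))

/-- `sin(tG) := (exp(itG) − exp(−itG))/(2i)` in a complex unital Banach algebra. -/
noncomputable def opSin {A : Type*} [NormedRing A] [NormedAlgebra ℂ A] (t : ℝ) (G : A) : A :=
  (2 * Complex.I)⁻¹ • (NormedSpace.exp (((t : ℂ) * Complex.I) • G) -
    NormedSpace.exp ((-(t : ℂ) * Complex.I) • G))

open NormedSpace MeasureTheory

section BanachAlgebra

variable {A : Type*} [NormedRing A] [NormedAlgebra ℂ A]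

@[simp] lemma opCos_zero (G : A) : opCos 0 G = 1 := by
  simp only [opCos, Complex.ofReal_zero, zero_mul, neg_zero, zero_smul, exp_zero]
  rw [← two_smul ℂ (1 : A), smul_smul, inv_mul_cancel₀ two_ne_zero, one_smul]

@[simp] lemma opSin_zero (G : A) : opSin 0 G = 0 := by
  simp [opSin]

lemma Commute.opCos_right {x G : A} (hx : Commute x G) (t : ℝ) : Commute x (opCos t G) :=
  (((hx.smul_right _).exp_right).add_right ((hx.smul_right _).exp_right)).smul_right _

lemma Commute.opSin_right {x G : A} (hx : Commute x G) (t : ℝ) : Commute x (opSin t G) :=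
  (((hx.smul_right _).exp_right).sub_right ((hx.smul_right _).exp_right)).smul_right _

variable [CompleteSpace A]

lemma exp_smul_mul_exp_smul (G : A) (c d : ℂ) :
    exp (c • G) * exp (d • G) = exp ((c + d) • G) := by
  let +nondep : NormedAlgebra ℚ A := .restrictScalars ℚ ℂ A
  rw [add_smul, exp_add_of_commute (((Commute.refl G).smul_left c).smul_right d)]

lemma opCos_add (G : A) (a b : ℝ) :
    opCos (a + b) G = opCos a G * opCos b G - opSin a G * opSin b G := by
  simp only [opCos, opSin, Complex.ofReal_add, smul_mul_smul_comm, add_mul, mul_add,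
    sub_mul, mul_sub, exp_smul_mul_exp_smul]
  ring_nf
  match_scalars <;> norm_num [Complex.ext_iff]

lemma opSin_add (G : A) (a b : ℝ) :
    opSin (a + b) G = opSin a G * opCos b G + opCos a G * opSin b G := by
  simp only [opCos, opSin, Complex.ofReal_add, smul_mul_smul_comm, add_mul, mul_add,
    sub_mul, mul_sub, exp_smul_mul_exp_smul]
  ring_nf
  match_scalars <;> norm_num [Complex.ext_iff]

@[fun_prop] lemma continuous_opCos (G : A) : Continuous fun t : ℝ => opCos t G := by
  let +nondep : NormedAlgebra ℚ A := .restrictScalars ℚ ℂ A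
  unfold opCos
  fun_prop

@[fun_prop] lemma continuous_opSin (G : A) : Continuous fun t : ℝ => opSin t G := by
  let +nondep : NormedAlgebra ℚ A := .restrictScalars ℚ ℂ A
  unfold opSin
  fun_prop

end BanachAlgebra

section BlockOperator

variable {𝕜 E : Type*} [RCLike 𝕜] [NormedAddCommGroup E] [NormedSpace 𝕜 E]

def blockOp (P Q R S : E →L[𝕜] E) : (E × E) →L[𝕜] (E × E) :=
  (P.coprod Q).prod (R.coprod S)

@[simp] lemma blockOp_apply (P Q R S : E →L[𝕜] E) (v : E × E) :
    blockOp P Q R S v = (P v.1 + Q v.2, R v.1 + S v.2) := rfl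

lemma blockOp_mul (P Q R S P' Q' R' S' : E →L[𝕜] E) :
    blockOp P Q R S * blockOp P' Q' R' S' =
      blockOp (P * P' + Q * R') (P * Q' + Q * S') (R * P' + S * R') (R * Q' + S * S') := by
  refine ContinuousLinearMap.ext fun v => Prod.ext ?_ ?_ <;>
    simp only [mul_apply_eq_comp, blockOp_apply, map_add, add_apply] <;> abel

lemma blockOp_one : blockOp (1 : E →L[𝕜] E) 0 0 1 = 1 := by
  ext v <;> simp

end BlockOperator

section Duhamel

variable {𝕜 F F' : Type*} [RCLike 𝕜] [NormedAddCommGroup F] [NormedSpace 𝕜 F] [NormedSpace ℝ F]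
  [NormedAddCommGroup F'] [NormedSpace 𝕜 F'] [NormedSpace ℝ F']

lemma ContinuousLinearEquiv.intervalIntegral_comp_comm (L : F ≃L[𝕜] F') (f : ℝ → F) (a b : ℝ) :
    ∫ x in a..b, L (f x) = L (∫ x in a..b, f x) := by
  simp_rw [intervalIntegral, L.integral_comp_comm, L.map_sub]

variable {U : ℝ → F →L[𝕜] F}

lemma apply_intervalIntegral_of_add_eq_mul (hU0 : U 0 = 1) (hU : ∀ a b, U (a + b) = U a * U b)
    (a b c d : ℝ) (g : ℝ → F) :
    U a (∫ τ in c..d, U (b - τ) (g τ)) = ∫ τ in c..d, U (a + b - τ) (g τ) := by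
  have hinv : ∀ s, U (-s) * U s = 1 := fun s => by rw [← hU, neg_add_cancel, hU0]
  -- `U a` is invertible, so it commutes with the integral even when the integrand is not integrable.
  let L : F ≃L[𝕜] F := .equivOfInverse (U a) (U (-a))
    (fun x => by simpa using congrArg (· x) (hinv a))
    (fun x => by simpa using congrArg (· x) (hinv (-a)))
  rw [show U a = (L : F →L[𝕜] F) from rfl, ContinuousLinearEquiv.coe_coe,
    ← L.intervalIntegral_comp_comm]
  congr 1 with τ
  rw [add_sub_assoc, hU, mul_apply_eq_comp]; rfl

theorem discrete_duhamel (hU0 : U 0 = 1) (hU : ∀ a b, U (a + b) = U a * U b)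
    (h : ℝ) (x : F) (g : ℝ → F) (f : ℕ → ℝ → F) (X : ℕ → F) (K : ℕ)
    (hX1 : X 1 = U h x + ∫ τ in (0:ℝ)..h, U (h - τ) (g τ))
    (hstep : ∀ k : ℕ, 1 ≤ k → k ≤ K - 1 →
      X (k + 1) = U h (X k) + ∫ τ in (0:ℝ)..h, U (h - τ) (f k τ)) :
    ∀ k : ℕ, 1 ≤ k → k ≤ K →
      X k = U (k * h) x + (∫ τ in (0:ℝ)..h, U (k * h - τ) (g τ)) +
        ∑ l ∈ Finset.Icc 1 (k - 1), ∫ τ in (0:ℝ)..h, U ((k - l) * h - τ) (f l τ) := by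
  intro k hk
  induction k, hk using Nat.le_induction with
  | base => simp [hX1]
  | succ k hk ih =>
    intro hkK
    obtain ⟨j, rfl⟩ := Nat.exists_eq_add_of_le' hk
    rw [hstep _ hk (by omega), ih (by omega), map_add, map_add, map_sum,
      apply_intervalIntegral_of_add_eq_mul hU0 hU, ← mul_apply_eq_comp, ← hU]
    simp_rw [apply_intervalIntegral_of_add_eq_mul hU0 hU, Nat.add_sub_cancel,
      Finset.sum_Icc_succ_top (show 1 ≤ j + 1 by omega)]
    push_cast
    have e1 : h + (j + 1) * h = (j + 1 + 1) * h := by ring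
    have e2 : ∀ l : ℝ, h + (j + 1 - l) * h = (j + 1 + 1 - l) * h := fun l => by ring
    have e3 : ((j : ℝ) + 1 + 1 - (j + 1)) * h = h := by ring
    simp_rw [e1, e2, e3]
    abel

end Duhamel

lemma intervalIntegral_prodMk {E F : Type*} [NormedAddCommGroup E] [NormedSpace ℝ E]
    [CompleteSpace E] [NormedAddCommGroup F] [NormedSpace ℝ F] [CompleteSpace F]
    {f : ℝ → E} {g : ℝ → F} {a b : ℝ} (hf : IntervalIntegrable f volume a b)
    (hg : IntervalIntegrable g volume a b) :
    ∫ x in a..b, (f x, g x) = (∫ x in a..b, f x, ∫ x in a..b, g x) := by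
  simp only [intervalIntegral, integral_pair hf.1 hg.1, integral_pair hf.2 hg.2]
  rfl

section WavePropagator

variable {E : Type*} [NormedAddCommGroup E] [NormedSpace ℂ E] (G Ginv : E →L[ℂ] E)

noncomputable def wavePropagator (t : ℝ) : (E × E) →L[ℂ] (E × E) :=
  blockOp (opCos t G) (Ginv * opSin t G) (-(G * opSin t G)) (opCos t G)

@[simp] lemma wavePropagator_apply (t : ℝ) (x y : E) :
    wavePropagator G Ginv t (x, y) =
      (opCos t G x + Ginv (opSin t G y), -(G (opSin t G x)) + opCos t G y) := rfl

lemma wavePropagator_zero : wavePropagator G Ginv 0 = 1 := by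
  simp [wavePropagator, blockOp_one]

variable [CompleteSpace E]

lemma wavePropagator_add (hGr : G * Ginv = 1) (hGl : Ginv * G = 1) (a b : ℝ) :
    wavePropagator G Ginv (a + b) = wavePropagator G Ginv a * wavePropagator G Ginv b := by
  have hInv : Commute Ginv G := hGl.trans hGr.symm
  have hsG : Ginv * opSin a G * G = opSin a G := by
    rw [mul_assoc, ← ((Commute.refl G).opSin_right a).eq, ← mul_assoc, hGl, one_mul]
  have hsGinv : G * opSin a G * Ginv = opSin a G := by
    rw [mul_assoc, ← (hInv.opSin_right a).eq, ← mul_assoc, hGr, one_mul]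
  have hcG : opCos a G * G = G * opCos a G := ((Commute.refl G).opCos_right a).eq.symm
  have hcGinv : opCos a G * Ginv = Ginv * opCos a G := (hInv.opCos_right a).eq.symm
  simp only [wavePropagator, blockOp_mul, opCos_add, opSin_add, mul_add, mul_neg,
    neg_mul, ← mul_assoc, hsG, hsGinv, hcG, hcGinv]
  congr 1 <;> abel

variable {G Ginv} in
lemma intervalIntegral_wavePropagator_inr {φ : ℝ → E} (hφ : Continuous φ) (c a b : ℝ) :
    ∫ τ in a..b, wavePropagator G Ginv (c - τ) (0, φ τ) =
      (∫ τ in a..b, Ginv (opSin (c - τ) G (φ τ)), ∫ τ in a..b, opCos (c - τ) G (φ τ)) := by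
  simp only [wavePropagator_apply, map_zero, zero_add, neg_zero]
  exact intervalIntegral_prodMk ((by fun_prop : Continuous _).intervalIntegrable a b)
    ((by fun_prop : Continuous _).intervalIntegrable a b)

end WavePropagator

theorem scheme_closed_form_general
    {E : Type*} [NormedAddCommGroup E] [NormedSpace ℂ E] [CompleteSpace E]
    (G Ginv : E →L[ℂ] E) (hGr : G * Ginv = 1) (hGl : Ginv * G = 1)
    (t₀ h : ℝ) (K : ℕ)
    (m : ℝ → (E →L[ℂ] E)) (hm : Continuous m)
    (ψ₀ ψ'₀ ψ''₀ : E) (Ψ Ψ' : ℕ → E)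
    (hΨ1 : Ψ 1 = opCos h G ψ₀ + Ginv (opSin h G ψ'₀) +
      ∫ τ in (0:ℝ)..h,
        Ginv (opSin (h - τ) G (m (t₀ + τ) (ψ₀ + τ • ψ'₀ + (τ ^ 2 / 2) • ψ''₀))))
    (hΨ'1 : Ψ' 1 = -(G (opSin h G ψ₀)) + opCos h G ψ'₀ +
      ∫ τ in (0:ℝ)..h,
        opCos (h - τ) G (m (t₀ + τ) (ψ₀ + τ • ψ'₀ + (τ ^ 2 / 2) • ψ''₀)))
    (hΨstep : ∀ k : ℕ, 1 ≤ k → k ≤ K - 1 →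
      Ψ (k + 1) = opCos h G (Ψ k) + Ginv (opSin h G (Ψ' k)) +
        ∫ τ in (0:ℝ)..h,
          Ginv (opSin (h - τ) G (m (t₀ + k * h + τ)
            (Ψ k + τ • Ψ' k + (τ ^ 2 / (2 * h)) • (Ψ' k - Ψ' (k - 1))))))
    (hΨ'step : ∀ k : ℕ, 1 ≤ k → k ≤ K - 1 →
      Ψ' (k + 1) = -(G (opSin h G (Ψ k))) + opCos h G (Ψ' k) +
        ∫ τ in (0:ℝ)..h,
          opCos (h - τ) G (m (t₀ + k * h + τ)
            (Ψ k + τ • Ψ' k + (τ ^ 2 / (2 * h)) • (Ψ' k - Ψ' (k - 1))))) :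
    ∀ k : ℕ, 2 ≤ k → k ≤ K →
      (Ψ k = opCos (k * h) G ψ₀ + Ginv (opSin (k * h) G ψ'₀) +
        (∫ τ in (0:ℝ)..h,
          Ginv (opSin ((k : ℝ) * h - τ) G (m (t₀ + τ) (ψ₀ + τ • ψ'₀ + (τ ^ 2 / 2) • ψ''₀)))) +
        ∑ l ∈ Finset.Icc 1 (k - 1),
          ∫ τ in (0:ℝ)..h,
            Ginv (opSin (((k : ℝ) - l) * h - τ) G (m (t₀ + l * h + τ)
              (Ψ l + τ • Ψ' l + (τ ^ 2 / (2 * h)) • (Ψ' l - Ψ' (l - 1)))))) ∧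
      (Ψ' k = -(G (opSin (k * h) G ψ₀)) + opCos (k * h) G ψ'₀ +
        (∫ τ in (0:ℝ)..h,
          opCos ((k : ℝ) * h - τ) G (m (t₀ + τ) (ψ₀ + τ • ψ'₀ + (τ ^ 2 / 2) • ψ''₀))) +
        ∑ l ∈ Finset.Icc 1 (k - 1),
          ∫ τ in (0:ℝ)..h,
            opCos (((k : ℝ) - l) * h - τ) G (m (t₀ + l * h + τ)
              (Ψ l + τ • Ψ' l + (τ ^ 2 / (2 * h)) • (Ψ' l - Ψ' (l - 1))))) := by
  intro k hk2 hkK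
  have hw₀ : Continuous fun τ : ℝ => m (t₀ + τ) (ψ₀ + τ • ψ'₀ + (τ ^ 2 / 2) • ψ''₀) := by
    fun_prop
  have hw : ∀ l : ℕ, Continuous fun τ : ℝ => m (t₀ + l * h + τ)
      (Ψ l + τ • Ψ' l + (τ ^ 2 / (2 * h)) • (Ψ' l - Ψ' (l - 1))) := fun l => by
    fun_prop
  have H := discrete_duhamel (wavePropagator_zero G Ginv) (wavePropagator_add G Ginv hGr hGl)
    h (ψ₀, ψ'₀) (fun τ => (0, m (t₀ + τ) (ψ₀ + τ • ψ'₀ + (τ ^ 2 / 2) • ψ''₀)))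
    (fun l τ => (0, m (t₀ + l * h + τ) (Ψ l + τ • Ψ' l + (τ ^ 2 / (2 * h)) • (Ψ' l - Ψ' (l - 1)))))
    (fun k => (Ψ k, Ψ' k)) K
    (by rw [wavePropagator_apply, intervalIntegral_wavePropagator_inr hw₀, hΨ1, hΨ'1]; rfl)
    (fun k hk hkK => by
      rw [wavePropagator_apply, intervalIntegral_wavePropagator_inr (hw k), hΨstep k hk hkK,
        hΨ'step k hk hkK]; rfl)
    k (by omega) hkK
  simp only [intervalIntegral_wavePropagator_inr, hw₀, hw] at H
  simp only [wavePropagator_apply] at H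
  simpa only [Prod.ext_iff, Prod.fst_add, Prod.snd_add, Prod.fst_sum, Prod.snd_sum] using H

/-- **Remark 3.4, closed form of the scheme Ξ³.**
Let `Ψ k`, `Ψ' k` be the numerical scheme generated from the data `ψ₀, ψ'₀, ψ''₀` by the
recursion of Table 1.  Then for every `2 ≤ k ≤ K` the closed-form representation holds. -/
theorem scheme_closed_form
    {E : Type*} [NormedAddCommGroup E] [NormedSpace ℂ E] [CompleteSpace E]
    (G Ginv : E →L[ℂ] E) (hGr : G * Ginv = 1) (hGl : Ginv * G = 1)
    (t₀ h : ℝ) (hh : 0 < h) (K : ℕ) (hK : 1 ≤ K)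
    (m : ℝ → (E →L[ℂ] E)) (hm : Continuous m)
    (ψ₀ ψ'₀ ψ''₀ : E) (Ψ Ψ' : ℕ → E)
    (hΨ0 : Ψ 0 = ψ₀) (hΨ'0 : Ψ' 0 = ψ'₀)
    (hΨ1 : Ψ 1 = opCos h G ψ₀ + Ginv (opSin h G ψ'₀) +
      ∫ τ in (0:ℝ)..h,
        Ginv (opSin (h - τ) G (m (t₀ + τ) (ψ₀ + τ • ψ'₀ + (τ ^ 2 / 2) • ψ''₀))))
    (hΨ'1 : Ψ' 1 = -(G (opSin h G ψ₀)) + opCos h G ψ'₀ +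
      ∫ τ in (0:ℝ)..h,
        opCos (h - τ) G (m (t₀ + τ) (ψ₀ + τ • ψ'₀ + (τ ^ 2 / 2) • ψ''₀)))
    (hΨstep : ∀ k : ℕ, 1 ≤ k → k ≤ K - 1 →
      Ψ (k + 1) = opCos h G (Ψ k) + Ginv (opSin h G (Ψ' k)) +
        ∫ τ in (0:ℝ)..h,
          Ginv (opSin (h - τ) G (m (t₀ + k * h + τ)
            (Ψ k + τ • Ψ' k + (τ ^ 2 / (2 * h)) • (Ψ' k - Ψ' (k - 1))))))
    (hΨ'step : ∀ k : ℕ, 1 ≤ k → k ≤ K - 1 →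
      Ψ' (k + 1) = -(G (opSin h G (Ψ k))) + opCos h G (Ψ' k) +
        ∫ τ in (0:ℝ)..h,
          opCos (h - τ) G (m (t₀ + k * h + τ)
            (Ψ k + τ • Ψ' k + (τ ^ 2 / (2 * h)) • (Ψ' k - Ψ' (k - 1))))) :
    ∀ k : ℕ, 2 ≤ k → k ≤ K →
      (Ψ k = opCos (k * h) G ψ₀ + Ginv (opSin (k * h) G ψ'₀) +
        (∫ τ in (0:ℝ)..h,
          Ginv (opSin ((k : ℝ) * h - τ) G (m (t₀ + τ) (ψ₀ + τ • ψ'₀ + (τ ^ 2 / 2) • ψ''₀)))) +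
        ∑ l ∈ Finset.Icc 1 (k - 1),
          ∫ τ in (0:ℝ)..h,
            Ginv (opSin (((k : ℝ) - l) * h - τ) G (m (t₀ + l * h + τ)
              (Ψ l + τ • Ψ' l + (τ ^ 2 / (2 * h)) • (Ψ' l - Ψ' (l - 1)))))) ∧
      (Ψ' k = -(G (opSin (k * h) G ψ₀)) + opCos (k * h) G ψ'₀ +
        (∫ τ in (0:ℝ)..h,
          opCos ((k : ℝ) * h - τ) G (m (t₀ + τ) (ψ₀ + τ • ψ'₀ + (τ ^ 2 / 2) • ψ''₀))) +
        ∑ l ∈ Finset.Icc 1 (k - 1),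
          ∫ τ in (0:ℝ)..h,
            opCos (((k : ℝ) - l) * h - τ) G (m (t₀ + l * h + τ)
              (Ψ l + τ • Ψ' l + (τ ^ 2 / (2 * h)) • (Ψ' l - Ψ' (l - 1))))) :=
  scheme_closed_form_general G Ginv hGr hGl t₀ h K m hm ψ₀ ψ'₀ ψ''₀ Ψ Ψ' hΨ1 hΨ'1 hΨstep hΨ'step
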